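/- arXiv:2107.13638 — 4 statements merged into one kernel-verified Lean document; each statement's English description precedes it below -/
import Mathlib

section
/- Let J be a finite set of jobs with nonnegative processing times p : J → ℝ, let m ≥ 2, and let σ : J → {1,…,m} be a schedule. Let T ≥ 0, let i ≠ i' be two machines, and let j, j', j'' be jobs with j ≠ j', σ⁻¹(i) = {j, j'}, σ(j'') = i', p_j + p_{j''} ≤ T, and p_{j''} ≥ p_{j'}. Define a schedule σ' by σ'(j') = i', σ'(j'') = i, and σ'(ĵ) = σ(ĵ) for all other jobs ĵ. Then μ(σ') ≤ max{T, μ(σ)}; in particular, if μ(σ) ≤ T then exchanging the two jobs preserves makespan at most T. -/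
/-- Exchange lemma: swapping the job `j'` on machine `i = {j, j'}` with a larger job `j''`
on machine `i'` (where `p j + p j'' ≤ T`) keeps the makespan at most `max T μ(σ)`. -/
theorem stmt_3 {J : Type*} [Fintype J] [DecidableEq J] (p : J → ℝ) (hp : ∀ j, 0 ≤ p j)
    (m : ℕ) (hm : 2 ≤ m) (σ : J → Fin m) (T : ℝ) (hT : 0 ≤ T)
    (i i' : Fin m) (hii' : i ≠ i') (j j' j'' : J) (hjj' : j ≠ j')
    (hpre : Finset.univ.filter (fun jj => σ jj = i) = {j, j'})
    (hσj'' : σ j'' = i') (hfit : p j + p j'' ≤ T) (hge : p j' ≤ p j'')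
    (σ' : J → Fin m)
    (hσ' : ∀ jj, σ' jj = if jj = j' then i' else if jj = j'' then i else σ jj) :
    (⨆ k, ∑ jj ∈ Finset.univ.filter (fun jj => σ' jj = k), p jj) ≤
      max T (⨆ k, ∑ jj ∈ Finset.univ.filter (fun jj => σ jj = k), p jj) := by
  haveI : Nonempty (Fin m) := ⟨i⟩
  have hσj : σ j = i := by
    have : j ∈ Finset.univ.filter (fun jj => σ jj = i) := by rw [hpre]; simp
    simpa using this
  have hσj' : σ j' = i := by
    have : j' ∈ Finset.univ.filter (fun jj => σ jj = i) := by rw [hpre]; simp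
    simpa using this
  have hj''j : j'' ≠ j := by
    intro h; apply hii'; rw [← hσj, ← h, hσj'']
  have hj''j' : j'' ≠ j' := by
    intro h; apply hii'; rw [← hσj', ← h, hσj'']
  have hbdd : BddAbove (Set.range fun k =>
      ∑ jj ∈ Finset.univ.filter (fun jj => σ jj = k), p jj) :=
    Set.Finite.bddAbove (Set.finite_range _)
  refine ciSup_le fun k => ?_
  by_cases hki : k = i
  · subst hki
    have hset : Finset.univ.filter (fun jj => σ' jj = k) = {j, j''} := by
      ext jj
      simp only [Finset.mem_filter, Finset.mem_univ, true_and, hσ' jj,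
        Finset.mem_insert, Finset.mem_singleton]
      by_cases h1 : jj = j'
      · subst h1; simp [hii'.symm, hjj'.symm, hj''j'.symm]
      · by_cases h2 : jj = j''
        · subst h2; simp [h1]
        · simp only [h1, h2, if_false]
          constructor
          · intro h
            have : jj ∈ Finset.univ.filter (fun jj => σ jj = k) := by simp [h]
            rw [hpre] at this
            simp only [Finset.mem_insert, Finset.mem_singleton] at this
            tauto
          · rintro (rfl | h)
            · exact hσj
            · exact h.elim
    rw [hset, Finset.sum_pair hj''j.symm]
    exact le_max_of_le_left hfit
  · by_cases hki' : k = i'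
    · subst hki'
      have hset : Finset.univ.filter (fun jj => σ' jj = k) =
          insert j' ((Finset.univ.filter (fun jj => σ jj = k)).erase j'') := by
        ext jj
        simp only [Finset.mem_filter, Finset.mem_univ, true_and, hσ' jj,
          Finset.mem_insert, Finset.mem_erase]
        by_cases h1 : jj = j'
        · simp [h1]
        · by_cases h2 : jj = j''
          · subst h2; simp [h1, hii', hj''j']
          · simp [h1, h2]
      have hj'' : j'' ∈ Finset.univ.filter (fun jj => σ jj = k) := by simp [hσj'']
      have hj'notin : j' ∉ (Finset.univ.filter (fun jj => σ jj = k)).erase j'' := by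
        simp [hσj', hii']
      rw [hset, Finset.sum_insert hj'notin,
        Finset.sum_erase_eq_sub hj'']
      have hle : p j' + (∑ jj ∈ Finset.univ.filter (fun jj => σ jj = k), p jj - p j'')
          ≤ ∑ jj ∈ Finset.univ.filter (fun jj => σ jj = k), p jj := by linarith
      exact le_max_of_le_right (hle.trans (le_ciSup hbdd k))
    · have hik : i ≠ k := fun h => hki h.symm
      have hi'k : i' ≠ k := fun h => hki' h.symm
      have hset : Finset.univ.filter (fun jj => σ' jj = k) =
          Finset.univ.filter (fun jj => σ jj = k) := by
        ext jj
        simp only [Finset.mem_filter, Finset.mem_univ, true_and, hσ' jj]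
        by_cases h1 : jj = j'
        · subst h1; simp [hik, hi'k, hσj']
        · by_cases h2 : jj = j''
          · subst h2; simp [h1, hik, hi'k, hσj'']
          · simp [h1, h2]
      rw [hset]
      exact le_max_of_le_right (le_ciSup hbdd k)
end

section
/- Let L, K ∈ ℕ and let c : Fin L × Fin K → ℕ. If ∑_{(i,k)} c(i,k) > 2L, then there exist an index i and indices k₁, k₂ with k₁ ≡ k₂ (mod 2) such that either k₁ ≠ k₂ and c(i,k₁) ≥ 1 and c(i,k₂) ≥ 1, or k₁ = k₂ and c(i,k₁) ≥ 2. In words: a configuration using more than 2L jobs, whose sizes are indexed by L intervals each subdivided into K subintervals, contains two jobs (possibly equal) from the same interval whose subinterval indices have the same parity. -/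
lemma aux_two_in_set {α : Type*} [DecidableEq α] (s : Finset α) (f : α → ℕ)
    (h : 2 ≤ ∑ k ∈ s, f k) :
    (∃ k ∈ s, 2 ≤ f k) ∨ ∃ k₁ ∈ s, ∃ k₂ ∈ s, k₁ ≠ k₂ ∧ 1 ≤ f k₁ ∧ 1 ≤ f k₂ := by
  by_cases hb : ∃ k ∈ s, 2 ≤ f k
  · exact Or.inl hb
  right
  push_neg at hb
  set s' := s.filter (fun k => f k ≠ 0) with hs'
  have hsum : ∑ k ∈ s', f k = ∑ k ∈ s, f k := Finset.sum_filter_ne_zero s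
  have hcard : 2 ≤ s'.card := by
    have : ∑ k ∈ s', f k ≤ ∑ _k ∈ s', 1 := by
      apply Finset.sum_le_sum
      intro k hk
      have := hb k (Finset.mem_filter.mp hk).1
      omega
    simp only [Finset.sum_const, smul_eq_mul, mul_one] at this
    omega
  obtain ⟨k₁, hk₁, k₂, hk₂, hne⟩ := Finset.one_lt_card.mp hcard
  have h₁ := Finset.mem_filter.mp hk₁
  have h₂ := Finset.mem_filter.mp hk₂
  exact ⟨k₁, h₁.1, k₂, h₂.1, hne, by omega, by omega⟩

/-- Pigeonhole: a configuration over `Fin L × Fin K` using more than `2L` jobs contains two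
jobs (possibly the same size) from the same interval with subinterval indices of equal
parity. -/
theorem stmt_10 (L K : ℕ) (c : Fin L × Fin K → ℕ)
    (h : 2 * L < ∑ q, c q) :
    ∃ (i : Fin L) (k₁ k₂ : Fin K), (k₁ : ℕ) % 2 = (k₂ : ℕ) % 2 ∧
      ((k₁ ≠ k₂ ∧ 1 ≤ c (i, k₁) ∧ 1 ≤ c (i, k₂)) ∨ (k₁ = k₂ ∧ 2 ≤ c (i, k₁))) := by
  -- find a row with at least 3 jobs
  have hsum : ∑ q, c q = ∑ i : Fin L, ∑ k : Fin K, c (i, k) := by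
    rw [← Finset.sum_product']
    rfl
  have hrow : ∃ i : Fin L, 3 ≤ ∑ k : Fin K, c (i, k) := by
    by_contra hc
    push_neg at hc
    have : ∑ i : Fin L, ∑ k : Fin K, c (i, k) ≤ ∑ _i : Fin L, 2 :=
      Finset.sum_le_sum (fun i _ => by have := hc i; omega)
    simp only [Finset.sum_const, Finset.card_univ, Fintype.card_fin, smul_eq_mul] at this
    omega
  obtain ⟨i, hi⟩ := hrow
  -- split by parity
  have hsplit := Finset.sum_filter_add_sum_filter_not (Finset.univ : Finset (Fin K))
    (fun k => (k : ℕ) % 2 = 0) (fun k => c (i, k))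
  have hpar : 2 ≤ ∑ k ∈ Finset.univ.filter (fun k : Fin K => (k : ℕ) % 2 = 0), c (i, k) ∨
      2 ≤ ∑ k ∈ Finset.univ.filter (fun k : Fin K => ¬ (k : ℕ) % 2 = 0), c (i, k) := by
    omega
  rcases hpar with hp | hp
  · rcases aux_two_in_set _ _ hp with ⟨k, hk, h2⟩ | ⟨k₁, hk₁, k₂, hk₂, hne, h1, h2⟩
    · exact ⟨i, k, k, rfl, Or.inr ⟨rfl, h2⟩⟩
    · have e₁ := (Finset.mem_filter.mp hk₁).2
      have e₂ := (Finset.mem_filter.mp hk₂).2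
      exact ⟨i, k₁, k₂, by omega, Or.inl ⟨hne, h1, h2⟩⟩
  · rcases aux_two_in_set _ _ hp with ⟨k, hk, h2⟩ | ⟨k₁, hk₁, k₂, hk₂, hne, h1, h2⟩
    · exact ⟨i, k, k, rfl, Or.inr ⟨rfl, h2⟩⟩
    · have e₁ := (Finset.mem_filter.mp hk₁).2
      have e₂ := (Finset.mem_filter.mp hk₂).2
      exact ⟨i, k₁, k₂, by omega, Or.inl ⟨hne, h1, h2⟩⟩
end

section
/- Let 0 < ε and T > 0, and for i, k ∈ ℕ let b_{i,k} = 2^i ε T + k ε² 2^i T. Let c : ℕ × ℕ → ℕ be finitely supported with ∑_{(i,k)} c(i,k)·b_{i,k} ≤ T, and suppose there are indices i, k₁, k₂ with k₁ ≡ k₂ (mod 2) such that c(i,k₁) ≥ 1 and c(i,k₂) ≥ 1 if k₁ ≠ k₂, or c(i,k₁) ≥ 2 if k₁ = k₂. Define c' = c − e_{(i,k₁)} − e_{(i,k₂)} + e_{(i+1,(k₁+k₂)/2)}, where e denotes a standard unit vector. Then c' has nonnegative entries, ∑_{(i,k)} c'(i,k)·b_{i,k} = ∑_{(i,k)} c(i,k)·b_{i,k}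 ≤ T (so c' is again a configuration), and ∑_{(i,k)} c'(i,k) = ∑_{(i,k)} c(i,k) − 1 (the ℓ₁-norm drops by exactly one). -/
/-- Replacing two jobs of sizes `b_{i,k₁}`, `b_{i,k₂}` (with `k₁ ≡ k₂ (mod 2)`) in a
configuration by a single job of size `b_{i+1,(k₁+k₂)/2}` yields again a configuration with
the same total size and with `ℓ₁`-norm exactly one less. -/
theorem stmt_11 (ε T : ℝ) (hε : 0 < ε) (hT : 0 < T)
    (b : ℕ → ℕ → ℝ)
    (hb : ∀ i k : ℕ, b i k = 2 ^ i * ε * T + (k : ℝ) * ε ^ 2 * 2 ^ i * T)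
    (c : (ℕ × ℕ) →₀ ℕ)
    (hconf : (c.sum fun q n => (n : ℝ) * b q.1 q.2) ≤ T)
    (i k₁ k₂ : ℕ) (hpar : k₁ % 2 = k₂ % 2)
    (hc : (k₁ ≠ k₂ ∧ 1 ≤ c (i, k₁) ∧ 1 ≤ c (i, k₂)) ∨ (k₁ = k₂ ∧ 2 ≤ c (i, k₁)))
    (c' : (ℕ × ℕ) →₀ ℤ)
    (hc' : ∀ q : ℕ × ℕ, c' q = (c q : ℤ)
      - (if q = (i, k₁) then 1 else 0) - (if q = (i, k₂) then 1 else 0)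
      + (if q = (i + 1, (k₁ + k₂) / 2) then 1 else 0)) :
    (∀ q, 0 ≤ c' q) ∧
    (c'.sum fun q n => (n : ℝ) * b q.1 q.2) = (c.sum fun q n => (n : ℝ) * b q.1 q.2) ∧
    (c'.sum fun q n => (n : ℝ) * b q.1 q.2) ≤ T ∧
    (c'.sum fun _ n => n) = (c.sum fun _ n => (n : ℤ)) - 1 := by
  -- c' as a finsupp expression
  have heq : c' = c.mapRange (Nat.cast) rfl - Finsupp.single (i, k₁) 1
      - Finsupp.single (i, k₂) 1 + Finsupp.single (i + 1, (k₁ + k₂) / 2) 1 := by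
    ext q
    rw [hc' q]
    simp [Finsupp.single_apply, eq_comm]
  -- parity fact
  have hdiv : ((k₁ + k₂) / 2 : ℕ) * 2 = k₁ + k₂ := by omega
  -- key: b i k₁ + b i k₂ = b (i+1) ((k₁+k₂)/2)
  have hbb : b i k₁ + b i k₂ = b (i + 1) ((k₁ + k₂) / 2) := by
    rw [hb, hb, hb]
    have h : (((k₁ + k₂) / 2 : ℕ) : ℝ) * 2 = (k₁ : ℝ) + k₂ := by exact_mod_cast hdiv
    rw [pow_succ 2 i]
    linear_combination (-(ε ^ 2) * 2 ^ i * T) * h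
  -- nonnegativity
  have hnn : ∀ q, 0 ≤ c' q := by
    intro q
    rw [hc' q]
    rcases hc with ⟨hne, h1, h2⟩ | ⟨heq2, h2⟩
    · split_ifs with ha hb' hcq <;> simp_all <;> omega
    · subst heq2
      split_ifs with ha hb' hcq <;> simp_all <;> omega
  have hsumeq : (c'.sum fun q n => (n : ℝ) * b q.1 q.2)
      = (c.sum fun q n => (n : ℝ) * b q.1 q.2) := by
    have hadd : ∀ (q : ℕ × ℕ) (m n : ℤ),
        ((m + n : ℤ) : ℝ) * b q.1 q.2 = (m : ℝ) * b q.1 q.2 + (n : ℝ) * b q.1 q.2 := by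
      intro q m n; push_cast; ring
    have hsub : ∀ (q : ℕ × ℕ) (m n : ℤ),
        ((m - n : ℤ) : ℝ) * b q.1 q.2 = (m : ℝ) * b q.1 q.2 - (n : ℝ) * b q.1 q.2 := by
      intro q m n; push_cast; ring
    have hz : ∀ q : ℕ × ℕ, ((0 : ℤ) : ℝ) * b q.1 q.2 = 0 := by intro q; simp
    rw [heq, Finsupp.sum_add_index' hz hadd, Finsupp.sum_sub_index hsub,
      Finsupp.sum_sub_index hsub, Finsupp.sum_single_index (hz _),
      Finsupp.sum_single_index (hz _), Finsupp.sum_single_index (hz _),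
      Finsupp.sum_mapRange_index]
    · push_cast
      simp only [Int.cast_one, one_mul]
      linarith [hbb]
    · intro q; simp
  refine ⟨hnn, hsumeq, hsumeq ▸ hconf, ?_⟩
  rw [heq, Finsupp.sum_add_index' (fun _ => rfl) (fun _ _ _ => rfl),
    Finsupp.sum_sub_index (fun _ _ _ => rfl), Finsupp.sum_sub_index (fun _ _ _ => rfl),
    Finsupp.sum_single_index rfl, Finsupp.sum_single_index rfl,
    Finsupp.sum_single_index rfl, Finsupp.sum_mapRange_index (fun _ => rfl)]
  ring
end

section
/- (Beck–Fiala) Let t > 0 and let A be a real m × n matrix such that the ℓ₁-norm of every column of A is at most t, i.e., ∑_{i=1}^m |A_{ij}| ≤ t for every column j. Then disc(A) < t, i.e., there exists z ∈ {0,1}^n such that for every row i, |∑_{j=1}^n A_{ij}·(z_j − 1/2)| < t. Since every column submatrix of A also has all column ℓ₁-norms at most t, this yields herdisc(A) < t. -/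
/-!
Beck–Fiala rounding. Start at `x = (1/2, …, 1/2)` and call a coordinate floating while it lies
strictly between `0` and `1`. A row is heavy if its entries on the floating columns have
`ℓ₁`-mass `> t`; since every column has mass `≤ t`, there are fewer heavy rows than floating
columns, so some nonzero direction supported on the floating columns is orthogonal to all heavy
rows. Moving along it until a coordinate reaches `0` or `1` keeps `x` in the cube, fixes one more
coordinate and leaves the heavy rows unchanged. Once a row is light it stays light, and from
then on only its floating coordinates move, each by less than `1` in total, so the row changes
by less than its light mass `≤ t`.
-/

open Finset Matrix

variable {ι κ : Type*}

theorem exists_nonneg_add_mul_eq_zero_or_one {a b : ℝ} (ha : a ∈ Set.Icc 0 1) (hb : b ≠ 0) :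
    ∃ c, 0 ≤ c ∧ (a + c * b = 0 ∨ a + c * b = 1) ∧
      ∀ s ∈ Set.Icc 0 c, a + s * b ∈ Set.Icc 0 1 := by
  obtain ⟨ha₀, ha₁⟩ := ha
  rcases hb.lt_or_gt with hb | hb
  · refine ⟨-a / b, div_nonneg_of_nonpos (by linarith) hb.le, Or.inl (by field_simp; ring),
      fun s ⟨hs₀, hs⟩ => ⟨?_, by nlinarith⟩⟩
    rw [le_div_iff_of_neg hb] at hs
    linarith
  · refine ⟨(1 - a) / b, div_nonneg (by linarith) hb.le, Or.inr (by field_simp; ring),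
      fun s ⟨hs₀, hs⟩ => ⟨by nlinarith, ?_⟩⟩
    rw [le_div_iff₀ hb] at hs
    linarith

theorem exists_ne_zero_mulVec_eq_zero_of_card_lt [Fintype ι] [Fintype κ]
    (A : Matrix ι κ ℝ) {R : Finset ι} {F : Finset κ} (hRF : #R < #F) :
    ∃ v ≠ 0, (∀ j ∉ F, v j = 0) ∧ ∀ i ∈ R, (A *ᵥ v) i = 0 := by
  classical
  let Φ : (κ → ℝ) →ₗ[ℝ] (R → ℝ) × (↥Fᶜ → ℝ) :=
    (LinearMap.pi fun i : R => (LinearMap.proj (i : ι)).comp A.mulVecLin).prod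
      (LinearMap.pi fun j : ↥Fᶜ => LinearMap.proj (j : κ))
  have hΦ : LinearMap.ker Φ ≠ ⊥ := by
    apply LinearMap.ker_ne_bot_of_finrank_lt
    simp only [Module.finrank_prod, Module.finrank_fintype_fun_eq_card, Fintype.card_coe,
      card_compl]
    have := card_le_univ F
    omega
  obtain ⟨v, hv, hv₀⟩ := Submodule.exists_mem_ne_zero_of_ne_bot hΦ
  have hΦv := LinearMap.mem_ker.mp hv
  simp only [Φ, LinearMap.prod_apply, Function.prod, Prod.mk_eq_zero, funext_iff] at hΦv
  exact ⟨v, hv₀, fun j hj => hΦv.2 ⟨j, mem_compl.mpr hj⟩, fun i hi => hΦv.1 ⟨i, hi⟩⟩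

noncomputable def heavyRows [Fintype ι] (A : Matrix ι κ ℝ) (t : ℝ) (F : Finset κ) : Finset ι :=
  {i | t < ∑ j ∈ F, |A i j|}

theorem card_heavyRows_lt [Fintype ι] {t : ℝ} (ht : 0 < t) {A : Matrix ι κ ℝ}
    (hcol : ∀ j, ∑ i, |A i j| ≤ t) {F : Finset κ} (hF : F.Nonempty) :
    #(heavyRows A t F) < #F := by
  rcases (heavyRows A t F).eq_empty_or_nonempty with hR | hR
  · simpa [hR] using hF.card_pos
  have hmass : #(heavyRows A t F) * t < #F * t := calc
    #(heavyRows A t F) * t < ∑ i ∈ heavyRows A t F, ∑ j ∈ F, |A i j| := by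
      rw [← nsmul_eq_mul, ← sum_const]
      exact sum_lt_sum_of_nonempty hR fun i hi => (mem_filter.mp hi).2
    _ ≤ ∑ i, ∑ j ∈ F, |A i j| :=
      sum_le_sum_of_subset_of_nonneg (subset_univ _) fun i _ _ =>
        sum_nonneg fun j _ => abs_nonneg _
    _ = ∑ j ∈ F, ∑ i, |A i j| := sum_comm
    _ ≤ #F * t := by
      rw [← nsmul_eq_mul, ← sum_const]
      exact sum_le_sum fun j _ => hcol j
  exact_mod_cast lt_of_mul_lt_mul_right hmass ht.le

theorem abs_sum_mul_lt_of_abs_lt_one [Fintype κ] {t : ℝ} (ht : 0 < t) {a w : κ → ℝ}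
    {F : Finset κ} (ha : ∑ j ∈ F, |a j| ≤ t) (hw₀ : ∀ j ∉ F, w j = 0)
    (hw₁ : ∀ j ∈ F, |w j| < 1) :
    |∑ j, a j * w j| < t := by
  rw [← sum_subset (subset_univ F) fun j _ hj => by simp [hw₀ j hj]]
  refine (abs_sum_le_sum_abs _ _).trans_lt ?_
  simp only [abs_mul]
  by_cases ha₀ : ∃ j ∈ F, a j ≠ 0
  · obtain ⟨j, hjF, hj⟩ := ha₀
    refine lt_of_lt_of_le (sum_lt_sum (fun j hj => ?_) ⟨j, hjF, ?_⟩) ha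
    · exact mul_le_of_le_one_right (abs_nonneg _) (hw₁ j hj).le
    · exact mul_lt_of_lt_one_right (abs_pos.mpr hj) (hw₁ j hjF)
  · simp only [not_exists, not_and, not_not] at ha₀
    rwa [sum_eq_zero fun j hj => by rw [ha₀ j hj, abs_zero, zero_mul]]

noncomputable def floatingCoords [Fintype κ] (x : κ → ℝ) : Finset κ := {j | x j ≠ 0 ∧ x j ≠ 1}

theorem not_mem_floatingCoords [Fintype κ] {x : κ → ℝ} {j : κ} :
    j ∉ floatingCoords x ↔ x j = 0 ∨ x j = 1 := by
  simp only [floatingCoords, mem_filter_univ]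
  tauto

theorem abs_sub_lt_one_of_mem_floatingCoords [Fintype κ] {x : κ → ℝ} {j : κ} {z : ℝ}
    (hx : x j ∈ Set.Icc 0 1) (hj : j ∈ floatingCoords x) (hz : z = 0 ∨ z = 1) :
    |z - x j| < 1 := by
  simp only [floatingCoords, mem_filter_univ] at hj
  have := hx.1.lt_of_ne' hj.1
  have := hx.2.lt_of_ne hj.2
  rw [abs_sub_lt_iff]
  rcases hz with rfl | rfl <;> constructor <;> linarith

theorem exists_smul_floatingCoords_ssubset [Fintype κ] {x v : κ → ℝ}
    (hx : ∀ j, x j ∈ Set.Icc 0 1) (hv : v ≠ 0) (hvx : ∀ j ∉ floatingCoords x, v j = 0) :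
    ∃ c : ℝ, (∀ j, (x + c • v) j ∈ Set.Icc 0 1) ∧
      floatingCoords (x + c • v) ⊂ floatingCoords x := by
  choose! c hc₀ hc_end hc_mem using
    fun j (hj : v j ≠ 0) => exists_nonneg_add_mul_eq_zero_or_one (hx j) hj
  -- the first coordinate to reach an endpoint
  obtain ⟨j₀, hj₀v, hj₀min⟩ := exists_min_image {j | v j ≠ 0} c
    (by simpa [Finset.Nonempty, funext_iff] using hv)
  rw [mem_filter_univ] at hj₀v
  have hfix : ∀ j, v j = 0 → (x + c j₀ • v) j = x j := fun j hj => by simp [hj]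
  refine ⟨c j₀, fun j => ?_, ssubset_iff_of_subset (fun j => ?_) |>.mpr ⟨j₀, ?_, ?_⟩⟩
  · by_cases hj : v j = 0
    · rw [hfix j hj]
      exact hx j
    · exact hc_mem j hj _ ⟨hc₀ j₀ hj₀v, hj₀min j (by simpa using hj)⟩
  · by_cases hj : v j = 0
    · simp only [floatingCoords, mem_filter_univ, hfix j hj, imp_self]
    · exact fun _ => by_contra fun h => hj (hvx j h)
  · exact by_contra fun h => hj₀v (hvx j₀ h)
  · simpa [not_mem_floatingCoords] using hc_end j₀ hj₀v

theorem exists_zero_one_abs_mulVec_sub_lt [Fintype ι] [Fintype κ] {t : ℝ} (ht : 0 < t)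
    (A : Matrix ι κ ℝ) (hcol : ∀ j, ∑ i, |A i j| ≤ t) (x : κ → ℝ) (hx : ∀ j, x j ∈ Set.Icc 0 1) :
    ∃ z : κ → ℝ, (∀ j, z j = 0 ∨ z j = 1) ∧ (∀ j ∉ floatingCoords x, z j = x j) ∧
      ∀ i, |(A *ᵥ (z - x)) i| < t := by
  induction hk : #(floatingCoords x) using Nat.strong_induction_on generalizing x with
  | _ k ih =>
    set F := floatingCoords x
    rcases F.eq_empty_or_nonempty with hF | hF
    · exact ⟨x, fun j => not_mem_floatingCoords.mp (by simp [F, hF]), fun _ _ => rfl,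
        fun i => by simpa using ht⟩
    obtain ⟨v, hv, hvF, hvA⟩ :=
      exists_ne_zero_mulVec_eq_zero_of_card_lt A (card_heavyRows_lt ht hcol hF)
    obtain ⟨c, hy, hyF⟩ := exists_smul_floatingCoords_ssubset hx hv hvF
    obtain ⟨z, hz, hzy, hzA⟩ := ih _ (hk ▸ card_lt_card hyF) _ hy rfl
    have hzx : ∀ j ∉ F, z j = x j := fun j hj => by
      rw [hzy j fun h => hj (hyF.subset h)]
      simp [hvF j hj]
    refine ⟨z, hz, hzx, fun i => ?_⟩
    by_cases hi : i ∈ heavyRows A t F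
    · have hsplit : z - x = z - (x + c • v) + c • v := by abel
      rw [hsplit, mulVec_add, mulVec_smul, Pi.add_apply, Pi.smul_apply, hvA i hi, smul_zero,
        add_zero]
      exact hzA i
    · refine abs_sum_mul_lt_of_abs_lt_one ht ?_ (fun j hj => sub_eq_zero.mpr (hzx j hj))
        fun j hj => abs_sub_lt_one_of_mem_floatingCoords (hx j) hj (hz j)
      simpa [heavyRows] using hi

theorem exists_zero_one_abs_sum_mul_sub_half_lt [Fintype ι] [Fintype κ] {t : ℝ} (ht : 0 < t)
    (A : Matrix ι κ ℝ) (hcol : ∀ j, ∑ i, |A i j| ≤ t) (I : Finset κ) :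
    ∃ z : κ → ℝ, (∀ j, z j = 0 ∨ z j = 1) ∧ ∀ i, |∑ j ∈ I, A i j * (z j - 1 / 2)| < t := by
  classical
  let B : Matrix ι κ ℝ := .of fun i j => if j ∈ I then A i j else 0
  have hB : ∀ j, ∑ i, |B i j| ≤ t := fun j => by
    by_cases hj : j ∈ I
    · simpa [B, hj] using hcol j
    · simpa [B, hj] using ht.le
  obtain ⟨z, hz, -, hzB⟩ := exists_zero_one_abs_mulVec_sub_lt ht B hB (fun _ => 1 / 2) fun _ => by norm_num
  refine ⟨z, hz, fun i => ?_⟩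
  simpa [B, mulVec, dotProduct, ite_mul, sum_ite_mem] using hzB i

/-- Beck–Fiala: if every column of `A` has `ℓ₁`-norm at most `t`, then `disc(A) < t`, and
since the hypothesis is inherited by column submatrices, also `herdisc(A) < t`. -/
theorem stmt_14 {m n : ℕ} (t : ℝ) (ht : 0 < t) (A : Matrix (Fin m) (Fin n) ℝ)
    (hcol : ∀ j, ∑ i, |A i j| ≤ t) :
    (∃ z : Fin n → ℝ, (∀ j, z j = 0 ∨ z j = 1) ∧
      ∀ i, |∑ j, A i j * (z j - 1 / 2)| < t) ∧
    ∀ I : Finset (Fin n), ∃ z : Fin n → ℝ, (∀ j, z j = 0 ∨ z j = 1) ∧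
      ∀ i, |∑ j ∈ I, A i j * (z j - 1 / 2)| < t :=
  ⟨exists_zero_one_abs_sum_mul_sub_half_lt ht A hcol univ,
    exists_zero_one_abs_sum_mul_sub_half_lt ht A hcol⟩
end
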